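/- arXiv:1802.06293 — 10 statements merged into one kernel-verified Lean document; each statement's English description precedes it below -/
import Mathlib

section
/- For all real x with -1 < x ≤ 2, it holds that ln(1+x) ≤ x - ((2 - ln 3)/4)·x². -/
/-!
Let `g(x) = x - c x² - log (1 + x)` with `c = (2 - log 3) / 4`, the constant for which `g 2 = 0`;
also `g 0 = 0`. Since `g'(x) = 2c · x (m - x) / (1 + x)` with `1 + m = 1 / (2c)`, `g` decreases
on `(-1, 0]`, increases on `[0, m]` and decreases on `[m, ∞)`, so on `(-1, 2]` it is bounded below
by `min (g 0) (g 2) = 0`.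
-/

open Real Set

noncomputable def logGap (c x : ℝ) : ℝ := x - c * x ^ 2 - log (1 + x)

lemma logGap_zero (c : ℝ) : logGap c 0 = 0 := by simp [logGap]

lemma hasDerivAt_logGap (c : ℝ) {x : ℝ} (hx : -1 < x) :
    HasDerivAt (logGap c) (x * (1 - 2 * c * (1 + x)) / (1 + x)) x := by
  have hx₀ : 1 + x ≠ 0 := by linarith
  have hlog := ((hasDerivAt_id' x).const_add 1).log hx₀
  have h : HasDerivAt (fun y ↦ y - c * y ^ 2 - log (1 + y)) (1 - c * (2 * x) - 1 / (1 + x)) x := by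
    simpa using ((hasDerivAt_id' x).fun_sub ((hasDerivAt_pow 2 x).const_mul c)).fun_sub hlog
  refine h.congr_deriv ?_
  field_simp
  ring

lemma continuousOn_logGap (c : ℝ) : ContinuousOn (logGap c) (Ioi (-1)) :=
  fun _ hx ↦ (hasDerivAt_logGap c hx).continuousAt.continuousWithinAt

section Monotonicity

variable {c : ℝ} {D : Set ℝ}

lemma monotoneOn_logGap (hD : Convex ℝ D) (hD₁ : D ⊆ Ioi (-1))
    (hsign : ∀ x ∈ interior D, 0 ≤ x * (1 - 2 * c * (1 + x))) : MonotoneOn (logGap c) D := by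
  refine monotoneOn_of_hasDerivWithinAt_nonneg hD ((continuousOn_logGap c).mono hD₁)
    (fun x hx ↦ (hasDerivAt_logGap c (hD₁ (interior_subset hx))).hasDerivWithinAt) ?_
  intro x hx
  have : (0 : ℝ) < 1 + x := by linarith [mem_Ioi.1 (hD₁ (interior_subset hx))]
  exact div_nonneg (hsign x hx) this.le

lemma antitoneOn_logGap (hD : Convex ℝ D) (hD₁ : D ⊆ Ioi (-1))
    (hsign : ∀ x ∈ interior D, x * (1 - 2 * c * (1 + x)) ≤ 0) : AntitoneOn (logGap c) D := by
  refine antitoneOn_of_hasDerivWithinAt_nonpos hD ((continuousOn_logGap c).mono hD₁)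
    (fun x hx ↦ (hasDerivAt_logGap c (hD₁ (interior_subset hx))).hasDerivWithinAt) ?_
  intro x hx
  have : (0 : ℝ) < 1 + x := by linarith [mem_Ioi.1 (hD₁ (interior_subset hx))]
  exact div_nonpos_of_nonpos_of_nonneg (hsign x hx) this.le

end Monotonicity

lemma logGap_nonneg_of_le {c b x : ℝ} (hc₀ : 0 < c) (hc₁ : c ≤ 1 / 2) (hb : 0 ≤ logGap c b)
    (hx : -1 < x) (hxb : x ≤ b) : 0 ≤ logGap c x := by
  obtain ⟨m, hm⟩ : ∃ m, 2 * c * (1 + m) = 1 := ⟨1 / (2 * c) - 1, by field_simp; ring⟩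
  have hm₀ : 0 ≤ m := by nlinarith
  have hfactor (y : ℝ) : y * (1 - 2 * c * (1 + y)) = 2 * c * (y * (m - y)) := by
    linear_combination (-y) * hm
  rcases le_total x 0 with hx₀ | hx₀
  · have hanti : AntitoneOn (logGap c) (Ioc (-1) 0) := by
      refine antitoneOn_logGap (convex_Ioc _ _) Ioc_subset_Ioi_self fun y hy ↦ ?_
      rw [interior_Ioc, mem_Ioo] at hy
      rw [hfactor]
      exact mul_nonpos_of_nonneg_of_nonpos (by positivity)
        (mul_nonpos_of_nonpos_of_nonneg hy.2.le (by linarith))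
    simpa [logGap_zero] using hanti ⟨hx, hx₀⟩ ⟨by norm_num, le_rfl⟩ hx₀
  rcases le_total x m with hxm | hxm
  · have hmono : MonotoneOn (logGap c) (Icc 0 m) := by
      refine monotoneOn_logGap (convex_Icc _ _)
        (Icc_subset_Ici_self.trans (Ici_subset_Ioi.2 (by norm_num))) fun y hy ↦ ?_
      rw [interior_Icc, mem_Ioo] at hy
      rw [hfactor]
      exact mul_nonneg (by positivity) (mul_nonneg hy.1.le (sub_nonneg.2 hy.2.le))
    simpa [logGap_zero] using hmono ⟨le_rfl, hm₀⟩ ⟨hx₀, hxm⟩ hx₀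
  · have hanti : AntitoneOn (logGap c) (Ici m) := by
      refine antitoneOn_logGap (convex_Ici _) (Ici_subset_Ioi.2 (by linarith)) fun y hy ↦ ?_
      rw [interior_Ici, mem_Ioi] at hy
      rw [hfactor]
      exact mul_nonpos_of_nonneg_of_nonpos (by positivity)
        (mul_nonpos_of_nonneg_of_nonpos (hm₀.trans hy.le) (sub_nonpos.2 hy.le))
    exact hb.trans (hanti hxm (hxm.trans hxb) hxb)

theorem log_upper_bound (x : ℝ) (h1 : -1 < x) (h2 : x ≤ 2) :
    Real.log (1 + x) ≤ x - ((2 - Real.log 3) / 4) * x ^ 2 := by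
  have hlog3_lt : log 3 < 2 := by
    linarith [log_lt_sub_one_of_pos (by norm_num : (0 : ℝ) < 3) (by norm_num)]
  have hlog3_nonneg : 0 ≤ log 3 := log_nonneg (by norm_num)
  have hgap_two : logGap ((2 - log 3) / 4) 2 = 0 := by norm_num [logGap]
  have := logGap_nonneg_of_le (by linarith) (by linarith) hgap_two.ge h1 h2
  unfold logGap at this
  linarith
end

section
/- Let g₁,…,g_T ∈ [-1,1] and let v̄ = (-Σₜ gₜ)/(2·Σₜ gₜ² + 2·|Σₜ gₜ|) (with v̄ = 0 if the denominator is 0). Then |v̄| ≤ 1/2 and Σₜ ln(1 - gₜ·v̄) ≥ (Σₜ gₜ)² / (4·Σₜ gₜ² + 4·|Σₜ gₜ|). -/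
/-!
Put `S = ∑ gₜ`, `Q = ∑ gₜ²` and `v = -S / (2Q + 2|S|)`. Since `|gₜ v| ≤ 1/2`, the bound
`ln (1 + x) ≥ x - x²` applies termwise, so the log-wealth is at least the concave quadratic
`-S v - Q v²`. At this `v` the quadratic equals `S² / (4Q + 4|S|) + S²|S| / (2Q + 2|S|)²`.
-/

open Finset

namespace Real

theorem abs_log_one_add_sub_self_le {x : ℝ} (hx : |x| < 1) :
    |log (1 + x) - x| ≤ x ^ 2 * (1 - |x|)⁻¹ / 2 := by
  have hpos : 0 < 1 + x := by linarith [neg_abs_le x]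
  have h := Complex.norm_log_one_add_sub_self_le (z := (x : ℂ)) (by simpa using hx)
  rwa [← Complex.ofReal_one, ← Complex.ofReal_add, ← Complex.ofReal_log hpos.le,
    ← Complex.ofReal_sub, Complex.norm_real, Complex.norm_real, norm_eq_abs, norm_eq_abs,
    sq_abs] at h

theorem sub_sq_le_log_one_add {x : ℝ} (hx : |x| ≤ 1 / 2) : x - x ^ 2 ≤ log (1 + x) := by
  have h := abs_log_one_add_sub_self_le (hx.trans_lt (by norm_num))
  have hinv : (1 - |x|)⁻¹ ≤ 2 := by
    rw [inv_le_comm₀ (by linarith) two_pos]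
    linarith
  have hrem : x ^ 2 * (1 - |x|)⁻¹ / 2 ≤ x ^ 2 := by nlinarith [sq_nonneg x]
  linarith [neg_abs_le (log (1 + x) - x)]

end Real

theorem sum_mul_sub_sum_sq_mul_le_sum_log {ι : Type*} (s : Finset ι) (g : ι → ℝ) (v : ℝ)
    (h : ∀ t ∈ s, |g t * v| ≤ 1 / 2) :
    -((∑ t ∈ s, g t) * v) - (∑ t ∈ s, g t ^ 2) * v ^ 2 ≤ ∑ t ∈ s, Real.log (1 - g t * v) := by
  have hterm : ∀ t ∈ s, -(g t * v) - (g t * v) ^ 2 ≤ Real.log (1 - g t * v) := fun t ht => by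
    simpa [sub_eq_add_neg] using
      Real.sub_sq_le_log_one_add (x := -(g t * v)) (by simpa using h t ht)
  calc -((∑ t ∈ s, g t) * v) - (∑ t ∈ s, g t ^ 2) * v ^ 2
      = ∑ t ∈ s, (-(g t * v) - (g t * v) ^ 2) := by
        simp only [sum_sub_distrib, sum_neg_distrib, sum_mul, mul_pow]
    _ ≤ _ := sum_le_sum hterm

section BettingFraction

variable {S Q : ℝ}

theorem abs_neg_div_two_mul_add_two_mul_abs_le_half (hQ : 0 ≤ Q) :
    |-S / (2 * Q + 2 * |S|)| ≤ 1 / 2 := by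
  rw [abs_div, abs_neg]
  rcases (abs_nonneg S).eq_or_lt with hS | hS
  · simp [← hS]
  · have hD : 0 < 2 * Q + 2 * |S| := by positivity
    rw [abs_of_pos hD, div_le_iff₀ hD]
    linarith

theorem div_le_neg_mul_sub_mul_sq {v : ℝ} (hQ : 0 ≤ Q) (hv : v = -S / (2 * Q + 2 * |S|)) :
    S ^ 2 / (4 * Q + 4 * |S|) ≤ -(S * v) - Q * v ^ 2 := by
  rcases eq_or_ne S 0 with rfl | hS
  · simp [hv]
  have hD : 0 < 2 * Q + 2 * |S| := by positivity
  have hslack : -(S * v) - Q * v ^ 2 - S ^ 2 / (4 * Q + 4 * |S|)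
      = S ^ 2 * |S| / (2 * Q + 2 * |S|) ^ 2 := by
    rw [hv]
    field_simp
    ring
  have : 0 ≤ S ^ 2 * |S| / (2 * Q + 2 * |S|) ^ 2 := by positivity
  linarith

end BettingFraction

theorem constant_betting_fraction_wealth (T : ℕ) (g : Fin T → ℝ)
    (hg : ∀ t, |g t| ≤ 1)
    (v : ℝ)
    (hv : v = (-(∑ t, g t)) / (2 * ∑ t, (g t) ^ 2 + 2 * |∑ t, g t|)) :
    |v| ≤ 1 / 2 ∧
      ∑ t, Real.log (1 - g t * v) ≥
        (∑ t, g t) ^ 2 / (4 * ∑ t, (g t) ^ 2 + 4 * |∑ t, g t|) := by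
  have hQ : 0 ≤ ∑ t, g t ^ 2 := sum_nonneg fun t _ => sq_nonneg (g t)
  have hv_half : |v| ≤ 1 / 2 := hv ▸ abs_neg_div_two_mul_add_two_mul_abs_le_half hQ
  have hgv : ∀ t ∈ univ, |g t * v| ≤ 1 / 2 := fun t _ => by
    rw [abs_mul]
    nlinarith [hg t, abs_nonneg (g t), abs_nonneg v]
  refine ⟨hv_half, ?_⟩
  calc (∑ t, g t) ^ 2 / (4 * ∑ t, g t ^ 2 + 4 * |∑ t, g t|)
      ≤ -((∑ t, g t) * v) - (∑ t, g t ^ 2) * v ^ 2 := div_le_neg_mul_sub_mul_sq hQ hv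
    _ ≤ ∑ t, Real.log (1 - g t * v) := sum_mul_sub_sum_sq_mul_le_sum_log univ g v hgv
end

section
/- Let B be a normed vector space, g₁,…,g_T ∈ B* with dual norms at most 1, z₁,…,z_T ∈ ℝ, and y₁,…,y_T ∈ B with ‖yₜ‖ ≤ 1. Set wₜ = zₜyₜ and sₜ = ⟨gₜ, yₜ⟩. Then for any ẘ ∈ B, Σₜ ⟨gₜ, wₜ - ẘ⟩ ≤ [Σₜ sₜ(zₜ - ‖ẘ‖)] + ‖ẘ‖·[Σₜ (⟨gₜ, yₜ⟩ - ⟨gₜ, ẘ/‖ẘ‖⟩)], where the second bracket is taken to be Σₜ⟨gₜ,yₜ⟩·‖ẘ‖ with ẘ/‖ẘ‖ interpreted as 0 when ẘ = 0. Moreover |sₜ| ≤ ‖gₜ‖_*. -/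
/-! The identity `⟨g, z • y - ẘ⟩ = ⟨g, y⟩ (z - ‖ẘ‖) + ‖ẘ‖ (⟨g, y⟩ - ⟨g, ẘ / ‖ẘ‖⟩)` holds round by
round for any linear functional, because `‖ẘ‖ • (ẘ / ‖ẘ‖) = ẘ` (also at `ẘ = 0`); summing over the
rounds gives the regret decomposition with equality. -/

open NormedSpace

theorem map_smul_sub_eq_add_norm_mul_sub_normalize {B F : Type*} [NormedAddCommGroup B]
    [NormedSpace ℝ B] [FunLike F B ℝ] [LinearMapClass F ℝ B ℝ] (f : F) (z : ℝ) (y w₀ : B) :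
    f (z • y - w₀) = f y * (z - ‖w₀‖) + ‖w₀‖ * (f y - f (normalize w₀)) := by
  have h : ‖w₀‖ * f (normalize w₀) = f w₀ := by
    rw [← smul_eq_mul, ← map_smul, norm_smul_normalize]
  rw [map_sub, map_smul, smul_eq_mul]
  linear_combination h

theorem abs_apply_le_opNorm_of_norm_le_one {B : Type*} [NormedAddCommGroup B] [NormedSpace ℝ B]
    (f : StrongDual ℝ B) {y : B} (hy : ‖y‖ ≤ 1) : |f y| ≤ ‖f‖ := by
  simpa using f.le_opNorm_of_le hy

theorem one_dimensional_reduction_general {B : Type*} [NormedAddCommGroup B] [NormedSpace ℝ B]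
    (T : ℕ) (g : Fin T → StrongDual ℝ B)
    (z : Fin T → ℝ) (y : Fin T → B) (hy : ∀ t, ‖y t‖ ≤ 1)
    (w : Fin T → B) (hw : ∀ t, w t = z t • y t)
    (s : Fin T → ℝ) (hs : ∀ t, s t = g t (y t)) (w0 : B) :
    (∑ t, g t (w t - w0) ≤
      (∑ t, s t * (z t - ‖w0‖)) +
        ‖w0‖ * ∑ t, (g t (y t) - g t (‖w0‖⁻¹ • w0))) ∧
    ∀ t, |s t| ≤ ‖g t‖ := by
  refine ⟨le_of_eq ?_, fun t => hs t ▸ abs_apply_le_opNorm_of_norm_le_one (g t) (hy t)⟩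
  rw [Finset.mul_sum, ← Finset.sum_add_distrib]
  refine Finset.sum_congr rfl fun t _ => ?_
  rw [hw, hs]
  exact map_smul_sub_eq_add_norm_mul_sub_normalize (g t) (z t) (y t) w0

theorem one_dimensional_reduction {B : Type*} [NormedAddCommGroup B] [NormedSpace ℝ B]
    (T : ℕ) (g : Fin T → StrongDual ℝ B) (hg : ∀ t, ‖g t‖ ≤ 1)
    (z : Fin T → ℝ) (y : Fin T → B) (hy : ∀ t, ‖y t‖ ≤ 1)
    (w : Fin T → B) (hw : ∀ t, w t = z t • y t)
    (s : Fin T → ℝ) (hs : ∀ t, s t = g t (y t)) (w0 : B) :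
    (∑ t, g t (w t - w0) ≤
      (∑ t, s t * (z t - ‖w0‖)) +
        ‖w0‖ * ∑ t, (g t (y t) - g t (‖w0‖⁻¹ • w0))) ∧
    ∀ t, |s t| ≤ ‖g t‖ :=
  one_dimensional_reduction_general T g z y hy w hw s hs w0
end

section
/- Let B be a reflexive Banach space such that for every nonzero b ∈ B there is a unique b* ∈ B* with ‖b*‖_* = 1 and ⟨b*, b⟩ = ‖b‖. Let W ⊂ B be closed and convex, let x ∉ W, and let p be a nearest point of W to x. Then the subdifferential of the distance function S_W at x equals the singleton {(x - p)*}. -/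
/-!
`S_W` is convex and continuous, so separating `(x, S_W x)` from the open strict epigraph of `S_W`
by Hahn–Banach produces a subgradient at `x`. Conversely, every subgradient `g` has `‖g‖ ≤ 1`
because `S_W` is 1-Lipschitz, and the subgradient inequality at `p` gives `g (x - p) ≥ ‖x - p‖`.
So every subgradient is a norming functional of `x - p`, and there is only one of those.
-/

open Metric Set

section TopologicalVectorSpace

variable {E : Type*} [TopologicalSpace E] [AddCommGroup E] [Module ℝ E]

def subdifferential (f : E → ℝ) (x : E) : Set (StrongDual ℝ E) :=
  {g | ∀ y, f y ≥ f x + g (y - x)}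

variable [IsTopologicalAddGroup E] [ContinuousSMul ℝ E] {f : E → ℝ}

theorem ConvexOn.subdifferential_nonempty (hf : ConvexOn ℝ univ f) (hfc : Continuous f)
    (x : E) : (subdifferential f x).Nonempty := by
  have hopen : IsOpen {q : E × ℝ | q.1 ∈ univ ∧ f q.1 < q.2} := by
    simp only [mem_univ, true_and]
    exact isOpen_lt (hfc.comp continuous_fst) continuous_snd
  obtain ⟨φ, hφ⟩ := geometric_hahn_banach_open_point hf.convex_strict_epigraph hopen
    (by simp : (x, f x) ∉ {q : E × ℝ | q.1 ∈ univ ∧ f q.1 < q.2})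
  set ψ := φ.comp (ContinuousLinearMap.inl ℝ E ℝ)
  set c := φ (0, 1)
  have hφ_apply : ∀ q : E × ℝ, φ q = ψ q.1 + q.2 * c := fun q => by
    calc φ q = φ ((q.1, 0) + q.2 • ((0 : E), (1 : ℝ))) := by congr 1; ext <;> simp
      _ = ψ q.1 + q.2 * c := by rw [map_add, map_smul, smul_eq_mul]; rfl
  have hsep : ∀ y t, f y < t → ψ y + t * c < ψ x + f x * c := fun y t h => by
    simpa only [hφ_apply] using hφ (y, t) ⟨mem_univ y, h⟩
  have hc : c < 0 := by
    have := hsep x (f x + 1) (lt_add_one _)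
    linarith
  refine ⟨(-c)⁻¹ • ψ, fun y => ?_⟩
  have hlt : ∀ t, f y < t → ((-c)⁻¹ • ψ) (y - x) < t - f x := fun t ht => by
    rw [smul_apply, map_sub, smul_eq_mul, inv_mul_lt_iff₀ (neg_pos.2 hc)]
    nlinarith [hsep y t ht]
  have := le_of_forall_gt fun t ht => lt_sub_iff_add_lt.1 (hlt t ht)
  linarith

end TopologicalVectorSpace

section NormedSpace

variable {E : Type*} [SeminormedAddCommGroup E] [NormedSpace ℝ E]

theorem Convex.convexOn_infDist {W : Set E} (hW : Convex ℝ W) :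
    ConvexOn ℝ univ (infDist · W) := by
  rcases W.eq_empty_or_nonempty with rfl | hne
  · simpa only [infDist_empty] using convexOn_const (0 : ℝ) convex_univ
  refine ⟨convex_univ, fun y _ z _ a b ha hb hab => le_of_forall_pos_le_add fun ε hε => ?_⟩
  obtain ⟨d, hdW, hd⟩ := (infDist_lt_iff hne).1 (lt_add_of_pos_right (infDist y W) hε)
  obtain ⟨e, heW, he⟩ := (infDist_lt_iff hne).1 (lt_add_of_pos_right (infDist z W) hε)
  calc infDist (a • y + b • z) W
      ≤ dist (a • y + b • z) (a • d + b • e) := infDist_le_dist_of_mem (hW hdW heW ha hb hab)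
    _ ≤ dist (a • y) (a • d) + dist (b • z) (b • e) := dist_add_add_le _ _ _ _
    _ = a * dist y d + b * dist z e := by
      rw [dist_smul₀, dist_smul₀, Real.norm_of_nonneg ha, Real.norm_of_nonneg hb]
    _ ≤ a * (infDist y W + ε) + b * (infDist z W + ε) := by gcongr
    _ = a • infDist y W + b • infDist z W + ε := by
      rw [smul_eq_mul, smul_eq_mul]; linear_combination ε * hab

theorem LipschitzWith.norm_le_of_mem_subdifferential {f : E → ℝ} {K : NNReal}
    (hf : LipschitzWith K f) {x : E} {g : StrongDual ℝ E} (hg : g ∈ subdifferential f x) :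
    ‖g‖ ≤ K := by
  have hle : ∀ v, g v ≤ K * ‖v‖ := fun v => by
    have hgv := hg (x + v)
    have hfv := hf.dist_le_mul (x + v) x
    rw [add_sub_cancel_left] at hgv
    rw [Real.dist_eq, dist_eq_norm, add_sub_cancel_left] at hfv
    linarith [le_abs_self (f (x + v) - f x)]
  refine g.opNorm_le_bound K.coe_nonneg fun v => abs_le.2 ⟨?_, hle v⟩
  have := hle (-v)
  rw [map_neg, norm_neg] at this
  linarith

theorem StrongDual.norm_eq_one_and_apply_eq_norm {g : StrongDual ℝ E} {v : E}
    (hg : ‖g‖ ≤ 1) (hv : 0 < ‖v‖) (hgv : ‖v‖ ≤ g v) : ‖g‖ = 1 ∧ g v = ‖v‖ := by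
  have hgv_le : g v ≤ ‖g‖ * ‖v‖ := (le_abs_self _).trans (g.le_opNorm v)
  refine ⟨le_antisymm hg ((le_mul_iff_one_le_left hv).1 (hgv.trans hgv_le)), ?_⟩
  exact le_antisymm (hgv_le.trans (mul_le_of_le_one_left (norm_nonneg v) hg)) hgv

theorem norm_eq_one_and_apply_eq_norm_of_mem_subdifferential_infDist {W : Set E} {x p : E}
    (hp : p ∈ W) (hnearest : ‖x - p‖ = infDist x W) (hxp : 0 < ‖x - p‖) {g : StrongDual ℝ E}
    (hg : g ∈ subdifferential (infDist · W) x) : ‖g‖ = 1 ∧ g (x - p) = ‖x - p‖ := by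
  refine StrongDual.norm_eq_one_and_apply_eq_norm
    (by exact_mod_cast (lipschitz_infDist_pt W).norm_le_of_mem_subdifferential hg) hxp ?_
  have hgp : infDist p W ≥ infDist x W + g (p - x) := hg p
  rw [← neg_sub x p, map_neg, infDist_zero_of_mem hp, ← hnearest] at hgp
  linarith

end NormedSpace

theorem subdifferential_of_distance_general {B : Type*} [NormedAddCommGroup B]
    [NormedSpace ℝ B]
    (hnorming : ∀ b : B, b ≠ 0 →
      ∃! f : StrongDual ℝ B, ‖f‖ = 1 ∧ f b = ‖b‖)
    (W : Set B) (hWconv : Convex ℝ W)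
    (x : B) (hx : x ∉ W) (p : B) (hp : p ∈ W)
    (hnearest : ‖x - p‖ = Metric.infDist x W)
    (xps : StrongDual ℝ B) (hxps1 : ‖xps‖ = 1)
    (hxps2 : xps (x - p) = ‖x - p‖) :
    {g : StrongDual ℝ B |
        ∀ y : B, Metric.infDist y W ≥ Metric.infDist x W + g (y - x)} = {xps} := by
  change subdifferential (infDist · W) x = {xps}
  have hxp : x - p ≠ 0 := sub_ne_zero.2 fun h => hx (h ▸ hp)
  have hunique : ∀ g ∈ subdifferential (infDist · W) x, g = xps := fun g hg => by
    obtain ⟨f, -, hf⟩ := hnorming (x - p) hxp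
    rw [hf g (norm_eq_one_and_apply_eq_norm_of_mem_subdifferential_infDist hp hnearest
      (norm_pos_iff.2 hxp) hg), hf xps ⟨hxps1, hxps2⟩]
  obtain ⟨g, hg⟩ := hWconv.convexOn_infDist.subdifferential_nonempty (continuous_infDist_pt W) x
  exact eq_singleton_iff_unique_mem.2 ⟨hunique g hg ▸ hg, hunique⟩

theorem subdifferential_of_distance {B : Type*} [NormedAddCommGroup B]
    [NormedSpace ℝ B] [CompleteSpace B]
    (hrefl : Function.Surjective (NormedSpace.inclusionInDoubleDual ℝ B))
    (hnorming : ∀ b : B, b ≠ 0 →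
      ∃! f : StrongDual ℝ B, ‖f‖ = 1 ∧ f b = ‖b‖)
    (W : Set B) (hWc : IsClosed W) (hWconv : Convex ℝ W)
    (x : B) (hx : x ∉ W) (p : B) (hp : p ∈ W)
    (hnearest : ‖x - p‖ = Metric.infDist x W)
    (xps : StrongDual ℝ B) (hxps1 : ‖xps‖ = 1)
    (hxps2 : xps (x - p) = ‖x - p‖) :
    {g : StrongDual ℝ B |
        ∀ y : B, Metric.infDist y W ≥ Metric.infDist x W + g (y - x)} = {xps} :=
  subdifferential_of_distance_general hnorming W hWconv x hx p hp hnearest xps hxps1 hxps2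
end

section
/- Let W ⊂ B be a closed convex subset of a reflexive Banach space. Let g₁,…,g_T ∈ B*, z₁,…,z_T ∈ B, wₜ ∈ Π_W(zₜ) a nearest point of W to zₜ, and define g̃ₜ ∈ (1/2)(gₜ + ‖gₜ‖_*·∂S_W(zₜ)) a subgradient of ℓ̃ₜ(x) = (1/2)(⟨gₜ,x⟩ + ‖gₜ‖_*·S_W(x)) at zₜ. Then for every ẘ ∈ W: Σₜ ⟨gₜ, wₜ - ẘ⟩ ≤ 2·Σₜ (ℓ̃ₜ(zₜ) - ℓ̃ₜ(ẘ)), and ‖g̃ₜ‖_* ≤ ‖gₜ‖_*. -/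
/-!
The surrogate loss `ℓ̃(x) = ½ (g x + ‖g‖ · d(x, W))` agrees with `½ g` on `W`, and at a point `z`
with nearest point `w ∈ W` it dominates `½ g w`, because `g w - g z ≤ ‖g‖ ‖z - w‖ = ‖g‖ d(z, W)`.
Summing `g (w - ẘ) ≤ 2 (ℓ̃(z) - ℓ̃(ẘ))` over the rounds gives the regret bound. The surrogate is
`‖g‖`-Lipschitz, being half the sum of two `‖g‖`-Lipschitz functions, and a subgradient of a
`K`-Lipschitz function has dual norm at most `K`.
-/

open Metric

section

variable {E : Type*} [NormedAddCommGroup E] [NormedSpace ℝ E]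

def HasSubgradientAt (f : E → ℝ) (φ : StrongDual ℝ E) (z : E) : Prop :=
  ∀ y, f z + φ (y - z) ≤ f y

theorem LipschitzWith.norm_le_of_hasSubgradientAt {f : E → ℝ} {K : NNReal}
    (hf : LipschitzWith K f) {φ : StrongDual ℝ E} {z : E} (hφ : HasSubgradientAt f φ z) :
    ‖φ‖ ≤ K := by
  have apply_le : ∀ u, φ u ≤ K * ‖u‖ := fun u => by
    have hsub := hφ (z + u)
    have hlip := hf.le_add_mul (z + u) z
    simp only [add_sub_cancel_left, dist_self_add_left] at hsub hlip
    linarith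
  refine φ.opNorm_le_bound K.2 fun u => abs_le.2 ⟨?_, apply_le u⟩
  have := apply_le (-u)
  rw [map_neg, norm_neg] at this
  linarith

noncomputable def surrogateLoss (W : Set E) (g : StrongDual ℝ E) (x : E) : ℝ :=
  (1 / 2) * (g x + ‖g‖ * infDist x W)

variable {W : Set E} {g : StrongDual ℝ E}

theorem surrogateLoss_of_mem {x : E} (hx : x ∈ W) : surrogateLoss W g x = g x / 2 := by
  rw [surrogateLoss, infDist_zero_of_mem hx]
  ring

theorem apply_le_two_mul_surrogateLoss {z w : E} (hw : ‖z - w‖ = infDist z W) :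
    g w ≤ 2 * surrogateLoss W g z := by
  have : g w - g z ≤ ‖g‖ * ‖z - w‖ := by
    rw [← map_sub, norm_sub_rev]
    exact (le_abs_self _).trans (g.le_opNorm _)
  rw [surrogateLoss, ← hw]
  linarith

theorem apply_sub_le_two_mul_surrogateLoss_sub {z w w₀ : E} (hw : ‖z - w‖ = infDist z W)
    (hw₀ : w₀ ∈ W) :
    g (w - w₀) ≤ 2 * (surrogateLoss W g z - surrogateLoss W g w₀) := by
  rw [map_sub, surrogateLoss_of_mem hw₀]
  linarith [apply_le_two_mul_surrogateLoss (g := g) hw]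

theorem lipschitzWith_surrogateLoss (W : Set E) (g : StrongDual ℝ E) :
    LipschitzWith ‖g‖₊ (surrogateLoss W g) := by
  refine LipschitzWith.of_le_add_mul _ fun x y => ?_
  have hg : g x ≤ g y + ‖g‖ * dist x y := g.lipschitz.le_add_mul x y
  have hd : infDist x W ≤ infDist y W + dist x y := infDist_le_infDist_add_dist
  rw [coe_nnnorm, surrogateLoss, surrogateLoss]
  nlinarith [norm_nonneg g]

end

theorem constrained_reduction_general {B : Type*} [NormedAddCommGroup B] [NormedSpace ℝ B]
    (W : Set B)
    (T : ℕ) (g : Fin T → StrongDual ℝ B) (z : Fin T → B)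
    (w : Fin T → B)
    (hwproj : ∀ t, ‖z t - w t‖ = Metric.infDist (z t) W)
    (ell : Fin T → B → ℝ)
    (hell : ∀ t x, ell t x = (1/2) * (g t x + ‖g t‖ * Metric.infDist x W))
    (gt : Fin T → StrongDual ℝ B)
    (hsub : ∀ t, ∀ y : B, ell t y ≥ ell t (z t) + gt t (y - z t)) :
    (∀ w0 ∈ W, ∑ t, g t (w t - w0) ≤ 2 * ∑ t, (ell t (z t) - ell t w0)) ∧
      ∀ t, ‖gt t‖ ≤ ‖g t‖ := by
  obtain rfl : ell = fun t => surrogateLoss W (g t) := funext fun t => funext (hell t)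
  refine ⟨fun w₀ hw₀ => ?_, fun t => ?_⟩
  · rw [Finset.mul_sum]
    exact Finset.sum_le_sum fun t _ => apply_sub_le_two_mul_surrogateLoss_sub (hwproj t) hw₀
  · exact (lipschitzWith_surrogateLoss W (g t)).norm_le_of_hasSubgradientAt (hsub t)

theorem constrained_reduction {B : Type*} [NormedAddCommGroup B] [NormedSpace ℝ B]
    [CompleteSpace B] (W : Set B) (hWc : IsClosed W) (hWconv : Convex ℝ W)
    (T : ℕ) (g : Fin T → StrongDual ℝ B) (z : Fin T → B)
    (w : Fin T → B) (hwW : ∀ t, w t ∈ W)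
    (hwproj : ∀ t, ‖z t - w t‖ = Metric.infDist (z t) W)
    (ell : Fin T → B → ℝ)
    (hell : ∀ t x, ell t x = (1/2) * (g t x + ‖g t‖ * Metric.infDist x W))
    (gt : Fin T → StrongDual ℝ B)
    (hsub : ∀ t, ∀ y : B, ell t y ≥ ell t (z t) + gt t (y - z t)) :
    (∀ w0 ∈ W, ∑ t, g t (w t - w0) ≤ 2 * ∑ t, (ell t (z t) - ell t w0)) ∧
      ∀ t, ‖gt t‖ ≤ ‖g t‖ :=
  constrained_reduction_general W T g z w hwproj ell hell gt hsub
end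

section
/- Let f: V → ℝ be a function on a normed vector space satisfying f((x+y)/2) ≤ (1/2)f(x) + (1/2)f(y) - (D/(2p))·‖x - y‖^p for all x, y, where D > 0 and p ≥ 1, and suppose f is convex. Then for every x, every subgradient g of f at x, and every δ: f(x + δ) ≥ f(x) + g(δ) + (D/p)·‖δ‖^p. -/
/-! The subgradient inequality at the midpoint `x + δ/2` gives `f x + g δ / 2 ≤ f (x + δ/2)`, and
the midpoint inequality bounds `f (x + δ/2)` by the average of `f x` and `f (x + δ)` minus the
remainder; comparing the two doubles the remainder `D/(2p) ‖δ‖^p` into `D/p ‖δ‖^p`. -/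

theorem le_of_midpoint_le_of_subgradient {V : Type*} [AddCommGroup V] [Module ℝ V]
    {f : V → ℝ} {g : V →ₗ[ℝ] ℝ} {x y : V} {c : ℝ}
    (hmid : f ((1/2 : ℝ) • (x + y)) ≤ (1/2) * f x + (1/2) * f y - c)
    (hg : f x + g ((1/2 : ℝ) • (x + y) - x) ≤ f ((1/2 : ℝ) • (x + y))) :
    f x + g (y - x) + 2 * c ≤ f y := by
  have hhalf : (1/2 : ℝ) • (x + y) - x = (1/2 : ℝ) • (y - x) := by module
  rw [hhalf, map_smul, smul_eq_mul] at hg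
  linarith

theorem midpoint_uniform_convexity_subgradient_general {V : Type*} [NormedAddCommGroup V]
    [NormedSpace ℝ V] (f : V → ℝ) (D p : ℝ)
    (hmid : ∀ x y : V, f ((1/2 : ℝ) • (x + y)) ≤
      (1/2) * f x + (1/2) * f y - (D / (2 * p)) * ‖x - y‖ ^ p)
    (x δ : V) (g : StrongDual ℝ V)
    (hg : ∀ y : V, f y ≥ f x + g (y - x)) :
    f (x + δ) ≥ f x + g δ + (D / p) * ‖δ‖ ^ p := by
  have key := le_of_midpoint_le_of_subgradient (g := (g : V →ₗ[ℝ] ℝ)) (hmid x (x + δ)) (hg _)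
  have hnorm : ‖x - (x + δ)‖ = ‖δ‖ := by rw [sub_add_cancel_left, norm_neg]
  have hdouble : 2 * (D / (2 * p)) = D / p := by
    rw [mul_div_assoc', mul_div_mul_left _ _ two_ne_zero]
  rw [hnorm, add_sub_cancel_left, ← mul_assoc, hdouble] at key
  exact key

theorem midpoint_uniform_convexity_subgradient {V : Type*} [NormedAddCommGroup V]
    [NormedSpace ℝ V] (f : V → ℝ) (D p : ℝ) (hD : 0 < D) (hp : 1 ≤ p)
    (hconv : ConvexOn ℝ Set.univ f)
    (hmid : ∀ x y : V, f ((1/2 : ℝ) • (x + y)) ≤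
      (1/2) * f x + (1/2) * f y - (D / (2 * p)) * ‖x - y‖ ^ p)
    (x δ : V) (g : StrongDual ℝ V)
    (hg : ∀ y : V, f y ≥ f x + g (y - x)) :
    f (x + δ) ≥ f x + g δ + (D / p) * ‖δ‖ ^ p :=
  midpoint_uniform_convexity_subgradient_general f D p hmid x δ g hg
end

section
/- Let B be a Banach space that is (2, D)-uniformly convex, i.e. ‖x+y‖² + ‖x-y‖² ≥ 2‖x‖² + 2D‖y‖² for all x, y ∈ B. Then f(x) = (1/2)‖x‖² is D-strongly convex with respect to ‖·‖: for all x, δ and every subgradient g ∈ ∂f(x), f(x+δ) ≥ f(x) + g(δ) + (D/2)‖δ‖². -/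
/-!
Fix the subgradient `g` at `x` and put `ψ v = ½‖x + v‖² - ½‖x‖² - g v - (D/2)‖v‖²`; the claim is
`ψ ≥ 0`. Uniform convexity applied to the pair `(x + v, v)` gives `ψ (2 • v) ≥ 2 ψ v`, while the
subgradient inequality gives `ψ v ≥ -(D/2)‖v‖²`. Iterating the doubling inequality,
`ψ v ≥ 2ⁿ ψ (2⁻ⁿ • v) ≥ -(D/2)‖v‖² / 2ⁿ`, and letting `n → ∞` gives `ψ v ≥ 0`.
-/

open Filter Topology

section Doubling

variable {E : Type*} [SeminormedAddCommGroup E] [NormedSpace ℝ E] {ψ : E → ℝ}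

theorem two_pow_mul_le_comp_two_pow_smul (hdouble : ∀ v, 2 * ψ v ≤ ψ ((2 : ℝ) • v)) (n : ℕ)
    (v : E) : 2 ^ n * ψ v ≤ ψ ((2 : ℝ) ^ n • v) := by
  induction n with
  | zero => simp
  | succ n ih =>
    calc 2 ^ (n + 1) * ψ v = 2 * (2 ^ n * ψ v) := by ring
      _ ≤ 2 * ψ ((2 : ℝ) ^ n • v) := by gcongr
      _ ≤ ψ ((2 : ℝ) • (2 : ℝ) ^ n • v) := hdouble _
      _ = ψ ((2 : ℝ) ^ (n + 1) • v) := by rw [smul_smul, pow_succ']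

theorem nonneg_of_doubling_of_sq_norm_lower_bound (K : ℝ)
    (hdouble : ∀ v, 2 * ψ v ≤ ψ ((2 : ℝ) • v)) (hlower : ∀ v, -(K * ‖v‖ ^ 2) ≤ ψ v) (v : E) :
    0 ≤ ψ v := by
  have hbound : ∀ n : ℕ, -(K * ‖v‖ ^ 2) * (1 / 2) ^ n ≤ ψ v := fun n => by
    have hpos : (0 : ℝ) < 2 ^ n := by positivity
    have hscale : (2 : ℝ) ^ n • ((2 : ℝ) ^ n)⁻¹ • v = v := smul_inv_smul₀ hpos.ne' v
    have hnorm : ‖((2 : ℝ) ^ n)⁻¹ • v‖ ^ 2 = ‖v‖ ^ 2 / (2 ^ n) ^ 2 := by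
      rw [norm_smul, norm_inv, Real.norm_of_nonneg hpos.le]
      field_simp
    calc -(K * ‖v‖ ^ 2) * (1 / 2) ^ n
        = 2 ^ n * -(K * ‖((2 : ℝ) ^ n)⁻¹ • v‖ ^ 2) := by
          rw [hnorm, one_div_pow]
          field_simp
      _ ≤ 2 ^ n * ψ (((2 : ℝ) ^ n)⁻¹ • v) := by gcongr; exact hlower _
      _ ≤ ψ ((2 : ℝ) ^ n • ((2 : ℝ) ^ n)⁻¹ • v) := two_pow_mul_le_comp_two_pow_smul hdouble n _
      _ = ψ v := by rw [hscale]
  have hlim : Tendsto (fun n : ℕ => -(K * ‖v‖ ^ 2) * (1 / 2) ^ n) atTop (𝓝 0) := by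
    simpa using (tendsto_pow_atTop_nhds_zero_of_lt_one (r := (1 / 2 : ℝ))
      (by norm_num) (by norm_num)).const_mul (-(K * ‖v‖ ^ 2))
  exact le_of_tendsto' hlim hbound

end Doubling

theorem uniformly_convex_sq_norm_strongly_convex_general {B : Type*} [NormedAddCommGroup B]
    [NormedSpace ℝ B] (D : ℝ)
    (huc : ∀ x y : B, ‖x + y‖ ^ 2 + ‖x - y‖ ^ 2 ≥ 2 * ‖x‖ ^ 2 + 2 * D * ‖y‖ ^ 2)
    (x δ : B) (g : StrongDual ℝ B)
    (hg : ∀ y : B, (1/2) * ‖y‖ ^ 2 ≥ (1/2) * ‖x‖ ^ 2 + g (y - x)) :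
    (1/2) * ‖x + δ‖ ^ 2 ≥ (1/2) * ‖x‖ ^ 2 + g δ + (D / 2) * ‖δ‖ ^ 2 := by
  set ψ : B → ℝ := fun v => (1/2) * ‖x + v‖ ^ 2 - (1/2) * ‖x‖ ^ 2 - g v - (D / 2) * ‖v‖ ^ 2
  have hdouble : ∀ v, 2 * ψ v ≤ ψ ((2 : ℝ) • v) := fun v => by
    have huc_v := huc (x + v) v
    rw [add_assoc, ← two_smul ℝ v, add_sub_cancel_right] at huc_v
    simp only [ψ, map_smul, norm_smul, smul_eq_mul, Real.norm_two]
    nlinarith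
  have hlower : ∀ v, -((D / 2) * ‖v‖ ^ 2) ≤ ψ v := fun v => by
    have hg_v := hg (x + v)
    rw [add_sub_cancel_left] at hg_v
    simp only [ψ]
    linarith
  have := nonneg_of_doubling_of_sq_norm_lower_bound (D / 2) hdouble hlower δ
  simp only [ψ] at this
  linarith

theorem uniformly_convex_sq_norm_strongly_convex {B : Type*} [NormedAddCommGroup B]
    [NormedSpace ℝ B] [CompleteSpace B] (D : ℝ) (hD : 0 < D)
    (huc : ∀ x y : B, ‖x + y‖ ^ 2 + ‖x - y‖ ^ 2 ≥ 2 * ‖x‖ ^ 2 + 2 * D * ‖y‖ ^ 2)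
    (x δ : B) (g : StrongDual ℝ B)
    (hg : ∀ y : B, (1/2) * ‖y‖ ^ 2 ≥ (1/2) * ‖x‖ ^ 2 + g (y - x)) :
    (1/2) * ‖x + δ‖ ^ 2 ≥ (1/2) * ‖x‖ ^ 2 + g δ + (D / 2) * ‖δ‖ ^ 2 :=
  uniformly_convex_sq_norm_strongly_convex_general D huc x δ g hg
end

section
/- Let B be a normed space, g ∈ B* with ‖g‖_* ≤ 1, and define ℓ(v) = -ln(1 - ⟨g, v⟩) for ‖v‖ ≤ 1/2. Then for all v, v̄ with ‖v‖ ≤ 1/2 and ‖v̄‖ ≤ 1/2: ℓ(v) - ℓ(v̄) ≤ ⟨∇ℓ(v), v - v̄⟩ - ((2 - ln 3)/4)·⟨∇ℓ(v), v - v̄⟩², where ∇ℓ(v) = g/(1 - ⟨g, v⟩). -/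
/-!
With `x := ⟨g, v - v̄⟩ / (1 - ⟨g, v⟩)` one has `1 + x = (1 - ⟨g, v̄⟩) / (1 - ⟨g, v⟩)`, so the
left-hand side is `log (1 + x)`, and the norm bounds confine `x` to `(-1, 2]`. The function
`f x := x - c x² - log (1 + x)` has derivative `x (1 - 2c (1 + x)) / (1 + x)`; for `0 < c ≤ 1/2` it
decreases on `(-1, 0]`, increases on `[0, (2c)⁻¹ - 1]` and decreases afterwards, so `f ≥ 0` on
`(-1, b]` as soon as `f b ≥ 0`. The constant `c = (2 - log 3)/4` is the one making `f 2 = 0`.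
-/

open Real Set

lemma monotoneOn_of_hasDerivAt_nonneg {D : Set ℝ} (hD : Convex ℝ D) {f f' : ℝ → ℝ}
    (hf : ∀ x ∈ D, HasDerivAt f (f' x) x) (hf' : ∀ x ∈ D, 0 ≤ f' x) : MonotoneOn f D :=
  monotoneOn_of_hasDerivWithinAt_nonneg hD (fun x hx ↦ (hf x hx).continuousAt.continuousWithinAt)
    (fun x hx ↦ (hf x (interior_subset hx)).hasDerivWithinAt)
    (fun x hx ↦ hf' x (interior_subset hx))

lemma antitoneOn_of_hasDerivAt_nonpos {D : Set ℝ} (hD : Convex ℝ D) {f f' : ℝ → ℝ}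
    (hf : ∀ x ∈ D, HasDerivAt f (f' x) x) (hf' : ∀ x ∈ D, f' x ≤ 0) : AntitoneOn f D :=
  antitoneOn_of_hasDerivWithinAt_nonpos hD (fun x hx ↦ (hf x hx).continuousAt.continuousWithinAt)
    (fun x hx ↦ (hf x (interior_subset hx)).hasDerivWithinAt)
    (fun x hx ↦ hf' x (interior_subset hx))

lemma hasDerivAt_sub_mul_sq_sub_log_one_add (c : ℝ) {x : ℝ} (hx : -1 < x) :
    HasDerivAt (fun y ↦ y - c * y ^ 2 - log (1 + y)) (x * (1 - 2 * c * (1 + x)) / (1 + x)) x := by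
  have hx₀ : 1 + x ≠ 0 := by linarith
  have hlog : HasDerivAt (fun y ↦ log (1 + y)) (1 / (1 + x)) x := by
    simpa using ((hasDerivAt_id x).const_add 1).log hx₀
  refine (((hasDerivAt_id' x).sub ((hasDerivAt_pow 2 x).const_mul c)).sub hlog).congr_deriv ?_
  field_simp
  ring

theorem log_one_add_le_sub_mul_sq {c b x : ℝ} (hc₀ : 0 < c) (hc : c ≤ 1 / 2)
    (hb : log (1 + b) ≤ b - c * b ^ 2) (hx : -1 < x) (hxb : x ≤ b) :
    log (1 + x) ≤ x - c * x ^ 2 := by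
  set f : ℝ → ℝ := fun y ↦ y - c * y ^ 2 - log (1 + y)
  suffices 0 ≤ f x by simp only [f] at this; linarith
  have hf' (y : ℝ) (hy : -1 < y) := hasDerivAt_sub_mul_sq_sub_log_one_add c hy
  set t := (2 * c)⁻¹ - 1
  have ht : 2 * c * (1 + t) = 1 := by simp only [t]; field_simp; ring
  have ht₀ : 0 ≤ t := by
    simp only [t]; rw [sub_nonneg, le_inv_comm₀ zero_lt_one (by positivity)]; linarith
  have hf0 : f 0 = 0 := by simp [f]
  rcases le_total x 0 with hx0 | hx0
  · have hanti : AntitoneOn f (Ioc (-1) 0) := by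
      refine antitoneOn_of_hasDerivAt_nonpos (convex_Ioc _ _) (fun y hy ↦ hf' y hy.1) ?_
      rintro y ⟨hy, hy0⟩
      exact div_nonpos_of_nonpos_of_nonneg
        (mul_nonpos_of_nonpos_of_nonneg hy0 (by nlinarith)) (by linarith)
    exact hf0 ▸ hanti ⟨hx, hx0⟩ ⟨by norm_num, le_rfl⟩ hx0
  rcases le_total x t with hxt | htx
  · have hmono : MonotoneOn f (Icc 0 t) := by
      refine monotoneOn_of_hasDerivAt_nonneg (convex_Icc _ _)
        (fun y hy ↦ hf' y (by linarith [hy.1])) ?_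
      rintro y ⟨hy0, hyt⟩
      exact div_nonneg (mul_nonneg hy0 (by nlinarith)) (by linarith)
    exact hf0 ▸ hmono ⟨le_rfl, ht₀⟩ ⟨hx0, hxt⟩ hx0
  · have hanti : AntitoneOn f (Ici t) := by
      refine antitoneOn_of_hasDerivAt_nonpos (convex_Ici _)
        (fun y (hty : t ≤ y) ↦ hf' y (by linarith)) ?_
      intro y (hty : t ≤ y)
      exact div_nonpos_of_nonpos_of_nonneg
        (mul_nonpos_of_nonneg_of_nonpos (by linarith) (by nlinarith)) (by linarith)
    have hfb := hanti htx (htx.trans hxb) hxb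
    simp only [f] at hfb ⊢
    linarith

theorem log_one_add_le_sub_two_sub_log_three_div_four_mul_sq {x : ℝ} (hx : -1 < x)
    (hx2 : x ≤ 2) :
    log (1 + x) ≤ x - (2 - log 3) / 4 * x ^ 2 := by
  have hlog3 : log 3 < 3 - 1 := log_lt_sub_one_of_pos (by norm_num) (by norm_num)
  have hlog3₀ : 0 ≤ log 3 := log_nonneg (by norm_num)
  refine log_one_add_le_sub_mul_sq (by linarith) (by linarith) (b := 2) ?_ hx hx2
  norm_num

theorem neg_log_one_sub_sub_neg_log_one_sub_le {a b : ℝ} (ha : a < 1) (hb : b < 1)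
    (hab : 1 - b ≤ 3 * (1 - a)) :
    -log (1 - a) - -log (1 - b) ≤
      (a - b) / (1 - a) - (2 - log 3) / 4 * ((a - b) / (1 - a)) ^ 2 := by
  have ha' : 0 < 1 - a := by linarith
  have hb' : 0 < 1 - b := by linarith
  have hx : 1 + (a - b) / (1 - a) = (1 - b) / (1 - a) := by field_simp; ring
  have hx₀ : 0 < 1 + (a - b) / (1 - a) := hx ▸ div_pos hb' ha'
  have hx₂ : 1 + (a - b) / (1 - a) ≤ 3 := by rwa [hx, div_le_iff₀ ha']
  have hlog : -log (1 - a) - -log (1 - b) = log (1 + (a - b) / (1 - a)) := by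
    rw [hx, log_div hb'.ne' ha'.ne']; ring
  rw [hlog]
  exact log_one_add_le_sub_two_sub_log_three_div_four_mul_sq (by linarith) (by linarith)

theorem expconcave_quadratic_bound {B : Type*} [NormedAddCommGroup B]
    [NormedSpace ℝ B] (g : StrongDual ℝ B) (hg : ‖g‖ ≤ 1)
    (v vbar : B) (hv : ‖v‖ ≤ 1 / 2) (hvbar : ‖vbar‖ ≤ 1 / 2) :
    -Real.log (1 - g v) - (-Real.log (1 - g vbar)) ≤
      (g (v - vbar)) / (1 - g v) -
        ((2 - Real.log 3) / 4) * ((g (v - vbar)) / (1 - g v)) ^ 2 := by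
  have hg_half {w : B} (hw : ‖w‖ ≤ 1 / 2) : |g w| ≤ 1 / 2 := by
    rw [← Real.norm_eq_abs]
    linarith [g.le_of_opNorm_le hg w]
  obtain ⟨hv₁, hv₂⟩ := abs_le.1 (hg_half hv)
  obtain ⟨hvbar₁, hvbar₂⟩ := abs_le.1 (hg_half hvbar)
  rw [map_sub]
  exact neg_log_one_sub_sub_neg_log_one_sub_le (by linarith) (by linarith) (by linarith)
end

section
/- Let B be a normed space, u ∈ B a unit vector, and g₁,…,g_T ∈ B* with ‖gₜ‖_* ≤ 1. Then sup over v with ‖v‖ ≤ 1/2 of Σₜ ln(1 - ⟨gₜ, v⟩) is at least (1/4)·⟨Σₜ gₜ, u⟩² / (Σₜ ⟨gₜ, u⟩² + |⟨Σₜ gₜ, u⟩|). -/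
/-!
Test the constant bet `v = -c • u` along `u`. Each round contributes
`log (1 + c ⟨gₜ, u⟩) ≥ c ⟨gₜ, u⟩ - c² ⟨gₜ, u⟩²`, so the wealth is at least the quadratic
`c S - c² Q` with `S = ⟨Σ gₜ, u⟩`, `Q = Σ ⟨gₜ, u⟩²`. Its value at `c = S / (2 (Q + |S|))`, which
is admissible since `|S| ≤ Q + |S|`, exceeds `S² / (4 (Q + |S|))` by `S² |S| / (4 (Q + |S|)²)`
(if `Q + |S| = 0`, both sides are `0` by the convention `x / 0 = 0`).
-/

open Real

theorem sub_sq_le_log_one_add {x : ℝ} (hx : -(1 / 2) ≤ x) : x - x ^ 2 ≤ log (1 + x) := by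
  rcases le_total 0 x with hx0 | hx0
  · have hpos : 0 < 1 + x := by linarith
    have : (1 + x)⁻¹ ≤ 1 - x + x ^ 2 := by
      rw [inv_le_iff_one_le_mul₀ hpos]; nlinarith
    linarith [one_sub_inv_le_log_of_pos hpos]
  · -- `log (1 + y) - y + y ^ 2` has derivative `y (1 + 2y) / (1 + y) ≤ 0` on `[-1/2, 0]`.
    set h : ℝ → ℝ := fun y ↦ log (1 + y) - y + y ^ 2
    have hne : ∀ y ∈ Set.Icc (-(1 / 2) : ℝ) 0, 1 + y ≠ 0 := fun y hy ↦ by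
      linarith [hy.1]
    have hanti : AntitoneOn h (Set.Icc (-(1 / 2)) 0) := by
      refine antitoneOn_of_hasDerivWithinAt_nonpos (convex_Icc _ _) ?_
        (f' := fun y ↦ (1 + y)⁻¹ - 1 + 2 * y) (fun y hy ↦ ?_) (fun y hy ↦ ?_)
      · exact ((continuousOn_const.add continuousOn_id).log hne).sub continuousOn_id |>.add
          (continuousOn_id.pow 2)
      · rw [interior_Icc] at hy
        have := ((((hasDerivAt_id' y).const_add 1).log (hne y (Set.Ioo_subset_Icc_self hy))).sub
          (hasDerivAt_id' y)).add ((hasDerivAt_id' y).pow 2)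
        exact (this.congr_deriv (by simp)).hasDerivWithinAt
      · rw [interior_Icc] at hy
        obtain ⟨hy1, hy2⟩ := hy
        have : 0 < 1 + y := by linarith
        rw [inv_eq_one_div, div_sub_one this.ne', div_add' _ _ _ this.ne']
        exact div_nonpos_of_nonpos_of_nonneg (by nlinarith) this.le
    have := hanti ⟨hx, hx0⟩ ⟨by norm_num, le_rfl⟩ hx0
    simp only [h, add_zero, log_one, sub_zero, ne_eq, OfNat.ofNat_ne_zero, not_false_eq_true,
      zero_pow] at this
    linarith

theorem mul_sum_sub_sq_mul_sum_sq_le_sum_log {ι : Type*} (s : Finset ι) (a : ι → ℝ) {c : ℝ}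
    (ha : ∀ i ∈ s, |a i| ≤ 1) (hc : |c| ≤ 1 / 2) :
    c * ∑ i ∈ s, a i - c ^ 2 * ∑ i ∈ s, a i ^ 2 ≤ ∑ i ∈ s, log (1 + c * a i) := by
  rw [Finset.mul_sum, Finset.mul_sum, ← Finset.sum_sub_distrib]
  refine Finset.sum_le_sum fun i hi ↦ ?_
  have hca : |c * a i| ≤ 1 / 2 := by
    rw [abs_mul]; nlinarith [abs_nonneg c, abs_nonneg (a i), ha i hi]
  simpa [mul_pow] using sub_sq_le_log_one_add (neg_abs_le _ |>.trans' (neg_le_neg hca))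

theorem abs_div_two_mul_add_abs_le {S Q : ℝ} (hQ : 0 ≤ Q) : |S / (2 * (Q + |S|))| ≤ 1 / 2 := by
  rw [abs_div, abs_of_nonneg (by positivity : 0 ≤ 2 * (Q + |S|))]
  exact div_le_of_le_mul₀ (by positivity) (by norm_num) (by linarith)

theorem quarter_sq_div_le_mul_sub_sq_mul {S Q : ℝ} (hQ : 0 ≤ Q) :
    1 / 4 * S ^ 2 / (Q + |S|) ≤
      S / (2 * (Q + |S|)) * S - (S / (2 * (Q + |S|))) ^ 2 * Q := by
  rcases eq_or_lt_of_le (add_nonneg hQ (abs_nonneg S)) with hD | hD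
  · simp [← hD]
  · have hgap : S / (2 * (Q + |S|)) * S - (S / (2 * (Q + |S|))) ^ 2 * Q - 1 / 4 * S ^ 2 / (Q + |S|)
        = S ^ 2 * |S| / (4 * (Q + |S|) ^ 2) := by
      field_simp; ring
    have : 0 ≤ S ^ 2 * |S| / (4 * (Q + |S|) ^ 2) := by positivity
    linarith

theorem bddAbove_sum_log_one_sub_apply {B ι : Type*} [NormedAddCommGroup B] [NormedSpace ℝ B]
    [Fintype ι] (g : ι → StrongDual ℝ B) (hg : ∀ i, ‖g i‖ ≤ 1) (r : ℝ) :
    BddAbove {y : ℝ | ∃ v : B, ‖v‖ ≤ r ∧ y = ∑ i, log (1 - g i v)} := by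
  refine ⟨Fintype.card ι • (1 + r), ?_⟩
  rintro y ⟨v, hv, rfl⟩
  refine Finset.sum_le_card_nsmul _ _ _ fun i _ ↦ ?_
  have hgv : |g i v| ≤ r := by
    simpa using ((g i).le_of_opNorm_le (hg i) v).trans (by linarith)
  calc log (1 - g i v) = log |1 - g i v| := (log_abs _).symm
    _ ≤ |1 - g i v| := log_le_self (abs_nonneg _)
    _ ≤ 1 + r := by linarith [abs_sub (1 : ℝ) (g i v), abs_one (α := ℝ)]

theorem banach_wealth_lower_bound {B : Type*} [NormedAddCommGroup B]
    [NormedSpace ℝ B] (u : B) (hu : ‖u‖ = 1) (T : ℕ)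
    (g : Fin T → StrongDual ℝ B) (hg : ∀ t, ‖g t‖ ≤ 1) :
    sSup {y : ℝ | ∃ v : B, ‖v‖ ≤ 1 / 2 ∧ y = ∑ t, Real.log (1 - g t v)} ≥
      (1 / 4) * (∑ t, g t u) ^ 2 /
        ((∑ t, (g t u) ^ 2) + |∑ t, g t u|) := by
  set S := ∑ t, g t u
  set Q := ∑ t, (g t u) ^ 2
  set c := S / (2 * (Q + |S|))
  have hQ : 0 ≤ Q := by positivity
  have hc : |c| ≤ 1 / 2 := abs_div_two_mul_add_abs_le hQ
  have hgu : ∀ t ∈ Finset.univ, |g t u| ≤ 1 := fun t _ ↦ by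
    simpa [hu] using (g t).le_of_opNorm_le (hg t) u
  have hv : ‖(-c) • u‖ ≤ 1 / 2 := by rwa [norm_smul, hu, mul_one, norm_neg, norm_eq_abs]
  refine (le_csSup (bddAbove_sum_log_one_sub_apply g hg _) ⟨(-c) • u, hv, rfl⟩).trans' ?_
  calc 1 / 4 * S ^ 2 / (Q + |S|) ≤ c * S - c ^ 2 * Q := quarter_sq_div_le_mul_sub_sq_mul hQ
    _ ≤ ∑ t, log (1 + c * g t u) := mul_sum_sub_sq_mul_sum_sq_le_sum_log _ _ hgu hc
    _ = ∑ t, log (1 - g t ((-c) • u)) := by simp [sub_eq_add_neg]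
end

section
/- With the notation of the running weighted average x̄ₜ = (x̄₀ + Σ_{i=1}^t hᵢxᵢ)/Zₜ, Zₜ = 1 + Σ_{i=1}^t hᵢ, define σₜ² = (‖x̄ₜ - x̄₀‖² + Σ_{i=1}^t hᵢ‖xᵢ - x̄ₜ‖²)/Zₜ in a Hilbert space. Then σ_T²Z_T = σ_{T-1}²Z_{T-1} + h_T·(Z_T/Z_{T-1})·‖x_T - x̄_T‖², and consequently Σ_{t=1}^T (Zₜ/Z_{t-1})·hₜ·‖xₜ - x̄ₜ‖² = σ_T²Z_T. -/
/-!
Expanding the squares, `Z_t σ_t² = ‖x̄₀‖² + ∑ hᵢ‖xᵢ‖² - Z_t‖x̄_t‖²` (König–Huygens with the anchor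
`x̄₀` counted as a point of weight one). Hence `Z_t σ_t² - Z_{t-1} σ_{t-1}²` only involves `x_t` and
the two means, which are tied by `Z_{t-1} x̄_{t-1} + h_t x_t = Z_t x̄_t`; eliminating `x̄_{t-1}` leaves
`h_t (Z_t / Z_{t-1}) ‖x_t - x̄_t‖²`. The sum formula is this recursion telescoped from `σ₀² = 0`.
-/

open Finset
open scoped RealInnerProductSpace

section

variable {H : Type*} [NormedAddCommGroup H] [InnerProductSpace ℝ H]

theorem sum_mul_norm_sub_sq {ι : Type*} (s : Finset ι) (w : ι → ℝ) (y : ι → H) (c : H) :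
    ∑ i ∈ s, w i * ‖y i - c‖ ^ 2 =
      ∑ i ∈ s, w i * ‖y i‖ ^ 2 - 2 * ⟪∑ i ∈ s, w i • y i, c⟫ + (∑ i ∈ s, w i) * ‖c‖ ^ 2 := by
  simp only [norm_sub_sq_real, mul_add, mul_sub, sum_add_distrib, sum_sub_distrib, sum_inner,
    real_inner_smul_left, mul_sum, sum_mul, mul_left_comm]

theorem norm_sub_sq_add_sum_mul_norm_sub_sq {ι : Type*} (s : Finset ι) (w : ι → ℝ) (y : ι → H)
    (a m : H) (hm : (1 + ∑ i ∈ s, w i) • m = a + ∑ i ∈ s, w i • y i) :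
    ‖m - a‖ ^ 2 + ∑ i ∈ s, w i * ‖y i - m‖ ^ 2 =
      ‖a‖ ^ 2 + ∑ i ∈ s, w i * ‖y i‖ ^ 2 - (1 + ∑ i ∈ s, w i) * ‖m‖ ^ 2 := by
  have hinner : ⟪a, m⟫ + ⟪∑ i ∈ s, w i • y i, m⟫ = (1 + ∑ i ∈ s, w i) * ‖m‖ ^ 2 := by
    rw [← inner_add_left, ← hm, real_inner_smul_left, real_inner_self_eq_norm_sq]
  rw [sum_mul_norm_sub_sq, norm_sub_sq_real, real_inner_comm]
  linear_combination -2 * hinner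

theorem weighted_mean_step {Z w : ℝ} (hZ : Z ≠ 0) {m m' y : H}
    (hm : Z • m + w • y = (Z + w) • m') :
    w * ‖y‖ ^ 2 - (Z + w) * ‖m'‖ ^ 2 + Z * ‖m‖ ^ 2 = w * ((Z + w) / Z) * ‖y - m'‖ ^ 2 := by
  have hZm : Z • m = (Z + w) • m' - w • y := eq_sub_of_add_eq hm
  have hsq : Z ^ 2 * ‖m‖ ^ 2 =
      (Z + w) ^ 2 * ‖m'‖ ^ 2 - 2 * (Z + w) * w * ⟪m', y⟫ + w ^ 2 * ‖y‖ ^ 2 := by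
    have := congrArg (fun v : H => ‖v‖ ^ 2) hZm
    simp only [norm_sub_sq_real, norm_smul, mul_pow, Real.norm_eq_abs, sq_abs,
      real_inner_smul_left, real_inner_smul_right] at this
    linear_combination this
  rw [norm_sub_sq_real, real_inner_comm]
  field_simp
  linear_combination hsq

end

theorem sum_Icc_eq_of_succ_eq_add {M : Type*} [AddCommMonoid M] {f g : ℕ → M} (h0 : f 0 = 0)
    (hsucc : ∀ t, f (t + 1) = f t + g (t + 1)) (T : ℕ) : ∑ t ∈ Icc 1 T, g t = f T := by
  induction T with
  | zero => simp [h0]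
  | succ T ih => rw [sum_Icc_succ_top (Nat.le_add_left 1 T), ih, hsucc]

theorem weighted_variance_recursion {H : Type*} [NormedAddCommGroup H]
    [InnerProductSpace ℝ H] (x : ℕ → H) (h : ℕ → ℝ) (hnn : ∀ t, 1 ≤ t → 0 ≤ h t)
    (xb0 : H) (Z : ℕ → ℝ) (hZ : ∀ t, Z t = 1 + ∑ i ∈ Finset.Icc 1 t, h i)
    (xb : ℕ → H)
    (hxb : ∀ t, xb t = (Z t)⁻¹ • (xb0 + ∑ i ∈ Finset.Icc 1 t, h i • x i))
    (S : ℕ → ℝ)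
    (hS : ∀ t, S t = ‖xb t - xb0‖ ^ 2 + ∑ i ∈ Finset.Icc 1 t, h i * ‖x i - xb t‖ ^ 2)
    (T : ℕ) (hT : 1 ≤ T) :
    S T = S (T - 1) + h T * (Z T / Z (T - 1)) * ‖x T - xb T‖ ^ 2 ∧
      ∑ t ∈ Finset.Icc 1 T, (Z t / Z (t - 1)) * h t * ‖x t - xb t‖ ^ 2 = S T := by
  have hZ_pos : ∀ t, 0 < Z t := fun t => by
    have : 0 ≤ ∑ i ∈ Icc 1 t, h i := sum_nonneg fun i hi => hnn i (mem_Icc.mp hi).1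
    rw [hZ]
    linarith
  have hZ_succ : ∀ t, Z (t + 1) = Z t + h (t + 1) := fun t => by
    rw [hZ, hZ, sum_Icc_succ_top (Nat.le_add_left 1 t), add_assoc]
  have hmean : ∀ t, Z t • xb t = xb0 + ∑ i ∈ Icc 1 t, h i • x i := fun t => by
    rw [hxb, smul_smul, mul_inv_cancel₀ (hZ_pos t).ne', one_smul]
  have hS_expand : ∀ t,
      S t = ‖xb0‖ ^ 2 + ∑ i ∈ Icc 1 t, h i * ‖x i‖ ^ 2 - Z t * ‖xb t‖ ^ 2 := fun t => by
    rw [hS, hZ t, norm_sub_sq_add_sum_mul_norm_sub_sq _ _ _ _ _ (hZ t ▸ hmean t)]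
  have hS_succ : ∀ t, S (t + 1) =
      S t + h (t + 1) * (Z (t + 1) / Z t) * ‖x (t + 1) - xb (t + 1)‖ ^ 2 := fun t => by
    have hcomb : Z t • xb t + h (t + 1) • x (t + 1) = (Z t + h (t + 1)) • xb (t + 1) := by
      rw [← hZ_succ, hmean, hmean, sum_Icc_succ_top (Nat.le_add_left 1 t), add_assoc]
    rw [hS_expand, hS_expand, sum_Icc_succ_top (Nat.le_add_left 1 t), hZ_succ,
      ← weighted_mean_step (hZ_pos t).ne' hcomb]
    ring
  have hS_zero : S 0 = 0 := by simp [hS, hxb, hZ]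
  refine ⟨?_, sum_Icc_eq_of_succ_eq_add hS_zero
    (fun t => by rw [hS_succ, Nat.add_sub_cancel]; ring) T⟩
  obtain ⟨u, rfl⟩ := Nat.exists_eq_add_of_le' hT
  simpa using hS_succ u
end
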